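/- Let A be positive semidefinite and X, Y operators admitting A-adjoints X^♯, Y^♯. Then dw_A(X + Y) ≤ dw_A(X) + dw_A(Y) + w_A(X^♯Y + Y^♯X). In particular, if A(X^♯Y + Y^♯X) = 0 then dw_A(X + Y) ≤ dw_A(X) + dw_A(Y). -/

import Mathlib

/-
For an `A`-unit vector `x`, put `Z = X^♯Y + Y^♯X`. Then
`‖(X + Y)x‖_A² = ‖Xx‖_A² + ‖Yx‖_A² + Re ⟨Zx, x⟩_A`, so the point
`(|⟨(X + Y)x, x⟩_A|, ‖(X + Y)x‖_A²)` of the plane is dominated coordinatewise by the sum of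
`(|⟨Xx, x⟩_A|, ‖Xx‖_A²)`, `(|⟨Yx, x⟩_A|, ‖Yx‖_A²)` and `(0, |⟨Zx, x⟩_A|)`; the triangle
inequality in the plane bounds the Davis–Wielandt value of `X + Y` at `x`.
Passing to suprema needs them finite: an operator `T` with an `A`-adjoint is `A`-bounded, by
Gelfand's power trick applied to the `A`-selfadjoint `T^♯T`.
-/

noncomputable section

namespace DW

variable {H : Type*} [NormedAddCommGroup H] [InnerProductSpace ℂ H]

/-- The semi-inner product induced by `A`: `⟨x,y⟩_A = ⟨Ax, y⟩`. -/
def innA (A : H →L[ℂ] H) (x y : H) : ℂ := inner ℂ (A x) y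

/-- The seminorm induced by `A`. -/
def normA (A : H →L[ℂ] H) (x : H) : ℝ := Real.sqrt (innA A x x).re

/-- `T` is `A`-bounded. -/
def IsABounded (A T : H →L[ℂ] H) : Prop := ∃ c > 0, ∀ x, normA A (T x) ≤ c * normA A x

/-- `S` is an `A`-adjoint of `T`. -/
def IsAAdjointPair (A T S : H →L[ℂ] H) : Prop := ∀ x y, innA A (T x) y = innA A x (S y)

/-- The `A`-operator seminorm. -/
def opNormA (A T : H →L[ℂ] H) : ℝ := sSup {r | ∃ x, normA A x = 1 ∧ r = normA A (T x)}

/-- The `A`-minimum modulus. -/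
def mA (A T : H →L[ℂ] H) : ℝ := sInf {r | ∃ x, normA A x = 1 ∧ r = normA A (T x)}

/-- The `A`-numerical radius. -/
def wA (A T : H →L[ℂ] H) : ℝ :=
  sSup {r | ∃ x, normA A x = 1 ∧ r = ‖innA A (T x) x‖}

/-- The `A`-Crawford number. -/
def cA (A T : H →L[ℂ] H) : ℝ :=
  sInf {r | ∃ x, normA A x = 1 ∧ r = ‖innA A (T x) x‖}

/-- The `A`-Davis-Wielandt radius. -/
def dwA (A T : H →L[ℂ] H) : ℝ :=
  sSup {r | ∃ x, normA A x = 1 ∧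
    r = Real.sqrt (‖innA A (T x) x‖ ^ 2 + normA A (T x) ^ 4)}

/-- The semi-inner product on `H ⊕ H` induced by `𝔸 = diag(A,A)`. -/
def innA2 (A : H →L[ℂ] H) (z w : H × H) : ℂ := innA A z.1 w.1 + innA A z.2 w.2

/-- The seminorm on `H ⊕ H` induced by `𝔸 = diag(A,A)`. -/
def normA2 (A : H →L[ℂ] H) (z : H × H) : ℝ := Real.sqrt (innA2 A z z).re

/-- The `𝔸`-numerical radius on `H ⊕ H`, `𝔸 = diag(A,A)`. -/
def wA2 (A : H →L[ℂ] H) (T : H × H →L[ℂ] H × H) : ℝ :=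
  sSup {r | ∃ z, normA2 A z = 1 ∧ r = ‖innA2 A (T z) z‖}

/-- The `𝔸`-Davis-Wielandt radius on `H ⊕ H`, `𝔸 = diag(A,A)`. -/
def dwA2 (A : H →L[ℂ] H) (T : H × H →L[ℂ] H × H) : ℝ :=
  sSup {r | ∃ z, normA2 A z = 1 ∧
    r = Real.sqrt (‖innA2 A (T z) z‖ ^ 2 + normA2 A (T z) ^ 4)}

/-- The block operator `[[0, X], [Y, 0]]` on `H ⊕ H`. -/
def offDiag (X Y : H →L[ℂ] H) : H × H →L[ℂ] H × H :=
  (X.comp (ContinuousLinearMap.snd ℂ H H)).prod (Y.comp (ContinuousLinearMap.fst ℂ H H))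

section Seminorm

variable {A : H →L[ℂ] H}

theorem innA_add_left (x y z : H) : innA A (x + y) z = innA A x z + innA A y z := by
  simp [innA]

theorem innA_add_right (x y z : H) : innA A x (y + z) = innA A x y + innA A x z := by
  simp [innA]

theorem conj_innA (hA : A.IsPositive) (x y : H) : starRingEnd ℂ (innA A x y) = innA A y x := by
  rw [innA, inner_conj_symm, innA]
  exact (hA.isSymmetric y x).symm

abbrev preInnerProductCore (hA : A.IsPositive) : PreInnerProductSpace.Core ℂ H where
  inner := innA A
  conj_inner_symm x y := conj_innA hA y x
  re_inner_nonneg := hA.2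
  add_left := innA_add_left
  smul_left x y r := by simp [innA, mul_comm]

theorem norm_innA_le (hA : A.IsPositive) (x y : H) : ‖innA A x y‖ ≤ normA A x * normA A y :=
  @InnerProductSpace.Core.norm_inner_le_norm ℂ H _ _ _ (preInnerProductCore hA) x y

theorem normA_nonneg (x : H) : 0 ≤ normA A x := Real.sqrt_nonneg _

theorem normA_sq (hA : A.IsPositive) (x : H) : normA A x ^ 2 = (innA A x x).re :=
  Real.sq_sqrt (hA.2 x)

theorem normA_le (x : H) : normA A x ≤ √‖A‖ * ‖x‖ := by
  rw [← Real.sqrt_sq (norm_nonneg x), ← Real.sqrt_mul (norm_nonneg A)]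
  refine Real.sqrt_le_sqrt ?_
  calc (innA A x x).re ≤ ‖innA A x x‖ := Complex.re_le_norm _
    _ ≤ ‖A x‖ * ‖x‖ := norm_inner_le_norm _ _
    _ ≤ ‖A‖ * ‖x‖ * ‖x‖ := by gcongr; exact A.le_opNorm x
    _ = ‖A‖ * ‖x‖ ^ 2 := by ring

end Seminorm

namespace IsAAdjointPair

variable {A T T' S S' : H →L[ℂ] H}

theorem symm (hA : A.IsPositive) (h : IsAAdjointPair A T T') : IsAAdjointPair A T' T := by
  intro x y
  rw [← conj_innA hA y, ← h, conj_innA hA]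

theorem add (hT : IsAAdjointPair A T T') (hS : IsAAdjointPair A S S') :
    IsAAdjointPair A (T + S) (T' + S') := by
  intro x y
  simp only [add_apply, innA_add_left, innA_add_right, hT x y, hS x y]

theorem comp (hT : IsAAdjointPair A T T') (hS : IsAAdjointPair A S S') :
    IsAAdjointPair A (T.comp S) (S'.comp T') := fun x y => (hT (S x) y).trans (hS x (T' y))

theorem pow (hT : IsAAdjointPair A T T) (n : ℕ) : IsAAdjointPair A (T ^ n) (T ^ n) := by
  induction n with
  | zero => exact fun x y => rfl
  | succ n ih => rw [pow_succ]; nth_rw 2 [pow_mul_comm']; exact ih.comp hT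

end IsAAdjointPair

theorem le_of_forall_pow_two_pow_le_mul_pow {a b C : ℝ} (hb : 0 ≤ b)
    (h : ∀ n : ℕ, a ^ 2 ^ n ≤ C * b ^ 2 ^ n) : a ≤ b := by
  by_contra! hba
  obtain rfl | hb := hb.eq_or_lt
  · have h0 := h 0
    simp only [pow_zero, pow_one, mul_zero] at h0
    exact h0.not_gt hba
  have hab : 1 < a / b := (one_lt_div hb).2 hba
  obtain ⟨n, hn⟩ := pow_unbounded_of_one_lt C hab
  have hle : (a / b) ^ 2 ^ n ≤ C := by
    rw [div_pow, div_le_iff₀ (by positivity)]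
    exact h n
  exact (hn.trans_le ((pow_le_pow_right₀ hab.le Nat.lt_two_pow_self.le).trans hle)).false

section Bounds

variable {A T T' : H →L[ℂ] H} {x : H}

theorem norm_innA_apply_self_le (hA : A.IsPositive) (hx : normA A x = 1) :
    ‖innA A (T x) x‖ ≤ normA A (T x) := by
  simpa [hx] using norm_innA_le hA (T x) x

theorem normA_apply_sq_le_normA_apply_apply (hA : A.IsPositive) (hT : IsAAdjointPair A T T)
    (hx : normA A x = 1) : normA A (T x) ^ 2 ≤ normA A (T (T x)) := by
  rw [normA_sq hA, ← hT]
  exact (Complex.re_le_norm _).trans (norm_innA_apply_self_le (T := T.comp T) hA hx)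

theorem normA_apply_pow_two_pow_le (hA : A.IsPositive) (hT : IsAAdjointPair A T T)
    (hx : normA A x = 1) (n : ℕ) : normA A (T x) ^ 2 ^ n ≤ normA A ((T ^ 2 ^ n) x) := by
  induction n with
  | zero => simp
  | succ n ih =>
    calc normA A (T x) ^ 2 ^ (n + 1) = (normA A (T x) ^ 2 ^ n) ^ 2 := by ring
      _ ≤ normA A ((T ^ 2 ^ n) x) ^ 2 := pow_le_pow_left₀ (pow_nonneg (normA_nonneg _) _) ih 2
      _ ≤ normA A ((T ^ 2 ^ n) ((T ^ 2 ^ n) x)) :=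
        normA_apply_sq_le_normA_apply_apply hA (hT.pow _) hx
      _ = normA A ((T ^ 2 ^ (n + 1)) x) := by rw [pow_succ, pow_mul, sq]; rfl

/-- `‖Tx‖_A ^ 2 ^ n ≤ ‖T ^ 2 ^ n x‖_A ≤ √‖A‖ ‖x‖ ‖T‖ ^ 2 ^ n`, and taking `2 ^ n`-th roots removes
the factor `√‖A‖ ‖x‖`, which `‖x‖_A = 1` does not control. -/
theorem normA_apply_le_opNorm (hA : A.IsPositive) (hT : IsAAdjointPair A T T)
    (hx : normA A x = 1) : normA A (T x) ≤ ‖T‖ := by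
  refine le_of_forall_pow_two_pow_le_mul_pow (norm_nonneg T)
    (C := √‖A‖ * ‖x‖) fun n => ?_
  calc normA A (T x) ^ 2 ^ n ≤ normA A ((T ^ 2 ^ n) x) := normA_apply_pow_two_pow_le hA hT hx n
    _ ≤ √‖A‖ * (‖T ^ 2 ^ n‖ * ‖x‖) :=
      (normA_le _).trans (by gcongr; exact ContinuousLinearMap.le_opNorm _ _)
    _ ≤ √‖A‖ * (‖T‖ ^ 2 ^ n * ‖x‖) := by gcongr; exact norm_pow_le' T (by positivity)
    _ = √‖A‖ * ‖x‖ * ‖T‖ ^ 2 ^ n := by ring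

theorem normA_apply_sq_le (hA : A.IsPositive) (hT : IsAAdjointPair A T T')
    (hx : normA A x = 1) : normA A (T x) ^ 2 ≤ ‖T'.comp T‖ := by
  rw [normA_sq hA, ← hT.symm hA]
  exact (Complex.re_le_norm _).trans <| (norm_innA_apply_self_le hA hx).trans <|
    normA_apply_le_opNorm hA ((hT.symm hA).comp hT) hx

theorem le_dwA (hA : A.IsPositive) (hT : IsAAdjointPair A T T') (hx : normA A x = 1) :
    √(‖innA A (T x) x‖ ^ 2 + normA A (T x) ^ 4) ≤ dwA A T := by
  refine le_csSup ⟨√(‖T'.comp T‖ + ‖T'.comp T‖ ^ 2), ?_⟩ ⟨x, hx, rfl⟩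
  rintro _ ⟨y, hy, rfl⟩
  have hTy := normA_apply_sq_le hA hT hy
  have hinn := norm_innA_apply_self_le (T := T) hA hy
  gcongr
  · exact (pow_le_pow_left₀ (norm_nonneg _) hinn 2).trans hTy
  · rw [show 4 = 2 * 2 by rfl, pow_mul]; gcongr

theorem le_wA (hA : A.IsPositive) (hT : IsAAdjointPair A T T') (hx : normA A x = 1) :
    ‖innA A (T x) x‖ ≤ wA A T := by
  refine le_csSup ⟨√‖T'.comp T‖, ?_⟩ ⟨x, hx, rfl⟩
  rintro _ ⟨y, hy, rfl⟩
  exact (norm_innA_apply_self_le hA hy).trans <|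
    Real.le_sqrt_of_sq_le (normA_apply_sq_le hA hT hy)

end Bounds

theorem sqrt_sq_add_sq_le {s t s₁ t₁ s₂ t₂ c : ℝ} (hs : |s| ≤ s₁ + s₂) (ht : |t| ≤ t₁ + t₂ + c)
    (hc : 0 ≤ c) : √(s ^ 2 + t ^ 2) ≤ √(s₁ ^ 2 + t₁ ^ 2) + √(s₂ ^ 2 + t₂ ^ 2) + c := by
  have hnorm (u v : ℝ) : √(u ^ 2 + v ^ 2) = ‖(⟨u, v⟩ : ℂ)‖ :=
    (Complex.norm_eq_sqrt_sq_add_sq ⟨u, v⟩).symm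
  calc √(s ^ 2 + t ^ 2) ≤ √((s₁ + s₂) ^ 2 + (t₁ + t₂ + c) ^ 2) :=
        Real.sqrt_le_sqrt <| add_le_add (sq_le_sq' (abs_le.1 hs).1 (abs_le.1 hs).2)
          (sq_le_sq' (abs_le.1 ht).1 (abs_le.1 ht).2)
    _ = ‖(⟨s₁, t₁⟩ : ℂ) + ⟨s₂, t₂⟩ + ⟨0, c⟩‖ := by
        rw [hnorm]; congr 1; apply Complex.ext <;> simp [add_assoc]
    _ ≤ ‖(⟨s₁, t₁⟩ : ℂ)‖ + ‖(⟨s₂, t₂⟩ : ℂ)‖ + ‖(⟨0, c⟩ : ℂ)‖ := norm_add₃_le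
    _ = √(s₁ ^ 2 + t₁ ^ 2) + √(s₂ ^ 2 + t₂ ^ 2) + c := by
        rw [← hnorm, ← hnorm, ← hnorm]; simp [Real.sqrt_sq hc]

section Sum

variable {A X Y X' Y' : H →L[ℂ] H}

theorem innA_add_apply_self (hA : A.IsPositive) (hX : IsAAdjointPair A X X')
    (hY : IsAAdjointPair A Y Y') (x : H) :
    innA A ((X + Y) x) ((X + Y) x) =
      innA A (X x) (X x) + innA A (Y x) (Y x) + innA A ((X'.comp Y + Y'.comp X) x) x := by
  simp only [add_apply, ContinuousLinearMap.comp_apply, innA_add_left, innA_add_right]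
  rw [hX.symm hA, hY.symm hA]
  ring

theorem dw_apply_add_le (hA : A.IsPositive) (hX : IsAAdjointPair A X X')
    (hY : IsAAdjointPair A Y Y') (x : H) :
    √(‖innA A ((X + Y) x) x‖ ^ 2 + normA A ((X + Y) x) ^ 4) ≤
      √(‖innA A (X x) x‖ ^ 2 + normA A (X x) ^ 4) + √(‖innA A (Y x) x‖ ^ 2 + normA A (Y x) ^ 4) +
        ‖innA A ((X'.comp Y + Y'.comp X) x) x‖ := by
  have hfour (r : ℝ) : r ^ 4 = (r ^ 2) ^ 2 := by ring
  simp only [hfour]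
  refine sqrt_sq_add_sq_le ?_ ?_ (norm_nonneg _)
  · rw [abs_norm, add_apply, innA_add_left]
    exact norm_add_le _ _
  · rw [normA_sq hA, normA_sq hA, normA_sq hA, innA_add_apply_self hA hX hY, Complex.add_re,
      Complex.add_re, abs_le]
    have hre := Complex.abs_re_le_norm (innA A ((X'.comp Y + Y'.comp X) x) x)
    have hX0 : 0 ≤ (innA A (X x) (X x)).re := hA.2 _
    have hY0 : 0 ≤ (innA A (Y x) (Y x)).re := hA.2 _
    constructor <;> linarith [abs_le.1 hre]

end Sum

section Radii

variable {A X Y X' Y' T : H →L[ℂ] H}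

theorem dwA_nonneg : 0 ≤ dwA A T :=
  Real.sSup_nonneg <| by rintro _ ⟨x, -, rfl⟩; positivity

theorem wA_nonneg : 0 ≤ wA A T :=
  Real.sSup_nonneg <| by rintro _ ⟨x, -, rfl⟩; positivity

theorem wA_eq_zero_of_comp_eq_zero (h : A.comp T = 0) : wA A T = 0 := by
  refine le_antisymm (Real.sSup_nonpos ?_) wA_nonneg
  rintro _ ⟨x, -, rfl⟩
  simp [innA, ← ContinuousLinearMap.comp_apply, h]

theorem isAAdjointPair_comp_add_comp (hA : A.IsPositive) (hX : IsAAdjointPair A X X')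
    (hY : IsAAdjointPair A Y Y') :
    IsAAdjointPair A (X'.comp Y + Y'.comp X) (X'.comp Y + Y'.comp X) := by
  simpa only [add_comm (Y'.comp X)] using ((hX.symm hA).comp hY).add ((hY.symm hA).comp hX)

theorem dwA_add_le (hA : A.IsPositive) (hX : IsAAdjointPair A X X') (hY : IsAAdjointPair A Y Y') :
    dwA A (X + Y) ≤ dwA A X + dwA A Y + wA A (X'.comp Y + Y'.comp X) := by
  refine Real.sSup_le ?_
    (add_nonneg (add_nonneg dwA_nonneg dwA_nonneg) wA_nonneg)
  rintro _ ⟨x, hx, rfl⟩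
  exact (dw_apply_add_le hA hX hY x).trans <| add_le_add (add_le_add (le_dwA hA hX hx)
    (le_dwA hA hY hx)) (le_wA hA (isAAdjointPair_comp_add_comp hA hX hY) hx)

end Radii

end DW

open DW

variable {H : Type*} [NormedAddCommGroup H] [InnerProductSpace ℂ H] [CompleteSpace H]

theorem stmt13 (A X Y X' Y' : H →L[ℂ] H) (hA : A.IsPositive)
    (hX' : IsAAdjointPair A X X') (hY' : IsAAdjointPair A Y Y') :
    dwA A (X + Y) ≤ dwA A X + dwA A Y + wA A (X'.comp Y + Y'.comp X) ∧
      (A.comp (X'.comp Y + Y'.comp X) = 0 → dwA A (X + Y) ≤ dwA A X + dwA A Y) := by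
  have hdw := dwA_add_le hA hX' hY'
  refine ⟨hdw, fun hZ => ?_⟩
  rwa [wA_eq_zero_of_comp_eq_zero hZ, add_zero] at hdw
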